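/- The measure π' := (1/6)(δ_{((1,0),(1,0))} + 2δ_{((2,0),(2,0))} + δ_{((3,0),(3,0))}) + (1/24)(3δ_{((1,0),(0,0))} + δ_{((1,0),(4,0))} + δ_{((3,0),(0,0))} + 3δ_{((3,0),(4,0))}) is a martingale coupling between μ_3 = (1/3)∑_{i=1}^3 δ_{(i,0)} and μ_3 P_0, and π' ≠ μ_3(Id, P_0). -/

import Mathlib

open MeasureTheory Filter
open scoped BoundedContinuousFunction ENNReal Topology

noncomputable section

/-- The plane with the Euclidean norm. -/
abbrev R2 : Type := EuclideanSpace ℝ (Fin 2)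

/-- The point `(a, b)` of the Euclidean plane. -/
def pt (a b : ℝ) : R2 := (WithLp.equiv 2 (Fin 2 → ℝ)).symm ![a, b]

/-- The unit vector at angle `θ`. -/
def dir (θ : ℝ) : R2 := pt (Real.cos θ) (Real.sin θ)

/-- The one-step kernel `P_θ` of the simple random walk along the line of angle `θ`. -/
def Pker (θ : ℝ) (x : R2) : Measure R2 :=
  (2 : ℝ≥0∞)⁻¹ • (Measure.dirac (x + dir θ) + Measure.dirac (x - dir θ))

/-- The measure `μ_m = (1/m) ∑_{i=1}^m δ_{(i,0)}`. -/
def muM (m : ℕ) : Measure R2 :=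
  (m : ℝ≥0∞)⁻¹ • ∑ i ∈ Finset.Icc 1 m, Measure.dirac (pt i 0)

/-- The coupling `μ(Id, P)` of `μ` with conditional law `P(x,·)` given `x`. -/
def couple (μ : Measure R2) (P : R2 → Measure R2) : Measure (R2 × R2) :=
  μ.bind (fun x => (P x).map (fun y => (x, y)))

/-- `π` is a coupling of `μ` and `ν`. -/
def IsCoupling {E F : Type*} [MeasurableSpace E] [MeasurableSpace F]
    (μ : Measure E) (ν : Measure F) (π : Measure (E × F)) : Prop :=
  IsProbabilityMeasure π ∧ π.map Prod.fst = μ ∧ π.map Prod.snd = ν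

/-- `π` is a martingale coupling of `μ` and `ν`: a coupling such that
`∫ φ(x)(y - x) dπ(x,y) = 0` for every bounded continuous `φ`. -/
def IsMartCoupling {E : Type*} [MeasurableSpace E] [NormedAddCommGroup E] [NormedSpace ℝ E]
    (μ ν : Measure E) (π : Measure (E × E)) : Prop :=
  IsCoupling μ ν π ∧ ∀ φ : E →ᵇ ℝ, ∫ p, φ p.1 • (p.2 - p.1) ∂π = 0

/-- The 1-Wasserstein distance: infimum of `∫ ‖x - y‖ dπ` over couplings. -/
def W1 {E : Type*} [MeasurableSpace E] [NormedAddCommGroup E] (μ ν : Measure E) : ℝ :=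
  sInf {r | ∃ π : Measure (E × E), IsCoupling μ ν π ∧ ∫ p, ‖p.1 - p.2‖ ∂π = r}

/-- The value `V^M_c(μ,ν)` of the martingale optimal transport problem. -/
def MOTval {E : Type*} [MeasurableSpace E] [NormedAddCommGroup E] [NormedSpace ℝ E]
    (c : E → E → ℝ) (μ ν : Measure E) : ℝ :=
  sInf {r | ∃ π : Measure (E × E), IsMartCoupling μ ν π ∧ ∫ p, c p.1 p.2 ∂π = r}

/-- Convex order: `∫ φ dμ ≤ ∫ φ dν` for every integrable convex `φ`. -/
def ConvexOrder {E : Type*} [MeasurableSpace E] [NormedAddCommGroup E] [NormedSpace ℝ E]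
    (μ ν : Measure E) : Prop :=
  ∀ φ : E → ℝ, ConvexOn ℝ Set.univ φ → Integrable φ ν → Integrable φ μ →
    ∫ x, φ x ∂μ ≤ ∫ x, φ x ∂ν

/-- The explicit martingale coupling `π'` between `μ_3` and `μ_3 P_0`. -/
def piPrime : Measure (R2 × R2) :=
  (6 : ℝ≥0∞)⁻¹ • (Measure.dirac (pt 1 0, pt 1 0) + 2 • Measure.dirac (pt 2 0, pt 2 0)
      + Measure.dirac (pt 3 0, pt 3 0))
  + (24 : ℝ≥0∞)⁻¹ • (3 • Measure.dirac (pt 1 0, pt 0 0) + Measure.dirac (pt 1 0, pt 4 0)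
      + Measure.dirac (pt 3 0, pt 0 0) + 3 • Measure.dirac (pt 3 0, pt 4 0))
-- helpers
lemma pt_add (a b c d : ℝ) : pt a b + pt c d = pt (a+c) (b+d) := by
  simp only [pt]; ext i; fin_cases i <;> simp

lemma pt_sub (a b c d : ℝ) : pt a b - pt c d = pt (a-c) (b-d) := by
  simp only [pt]; ext i; fin_cases i <;> simp

lemma pt_smul (r a b : ℝ) : r • pt a b = pt (r*a) (r*b) := by
  simp only [pt]; ext i; fin_cases i <;> simp

lemma pt_inj {a b c d : ℝ} : pt a b = pt c d ↔ a = c ∧ b = d := by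
  constructor
  · intro h
    exact ⟨congrFun (congrArg (WithLp.equiv 2 (Fin 2 → ℝ)) h) 0,
           congrFun (congrArg (WithLp.equiv 2 (Fin 2 → ℝ)) h) 1⟩
  · rintro ⟨rfl, rfl⟩; rfl

lemma dir_zero : dir 0 = pt 1 0 := by simp [dir]

lemma muM3 : muM 3 = (3:ℝ≥0∞)⁻¹ • (Measure.dirac (pt 1 0) + Measure.dirac (pt 2 0)
    + Measure.dirac (pt 3 0)) := by
  rw [muM, show Finset.Icc 1 3 = {1,2,3} from rfl]
  rw [Finset.sum_insert (by decide), Finset.sum_insert (by decide), Finset.sum_singleton]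
  norm_num [add_assoc]

lemma measurable_Pker : Measurable (Pker 0) := by
  apply Measure.measurable_of_measurable_coe
  intro s hs
  simp only [Pker, Measure.smul_apply, Measure.add_apply, Measure.dirac_apply, smul_eq_mul]
  exact (((measurable_one.indicator hs).comp (measurable_add_const _)).add
    ((measurable_one.indicator hs).comp (measurable_sub_const _))).const_mul _

lemma c62 : (6:ℝ≥0∞)⁻¹ * 2 = 3⁻¹ := by
  rw [show (6:ℝ≥0∞) = 3*2 by norm_num, ENNReal.mul_inv (Or.inl (by norm_num)) (Or.inl (by norm_num)),
    mul_assoc, ENNReal.inv_mul_cancel (by norm_num) (by norm_num), mul_one]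

lemma c243 : (24:ℝ≥0∞)⁻¹ * 3 = 8⁻¹ := by
  rw [show (24:ℝ≥0∞) = 8*3 by norm_num, ENNReal.mul_inv (Or.inl (by norm_num)) (Or.inl (by norm_num)),
    mul_assoc, ENNReal.inv_mul_cancel (by norm_num) (by norm_num), mul_one]

lemma piPrime_eq : piPrime =
    (6:ℝ≥0∞)⁻¹ • Measure.dirac (pt 1 0, pt 1 0)
  + ((3:ℝ≥0∞)⁻¹ • Measure.dirac (pt 2 0, pt 2 0)
  + ((6:ℝ≥0∞)⁻¹ • Measure.dirac (pt 3 0, pt 3 0)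
  + ((8:ℝ≥0∞)⁻¹ • Measure.dirac (pt 1 0, pt 0 0)
  + ((24:ℝ≥0∞)⁻¹ • Measure.dirac (pt 1 0, pt 4 0)
  + ((24:ℝ≥0∞)⁻¹ • Measure.dirac (pt 3 0, pt 0 0)
  + (8:ℝ≥0∞)⁻¹ • Measure.dirac (pt 3 0, pt 4 0)))))) := by
  rw [piPrime]
  rw [show ((2:ℕ) • Measure.dirac (pt 2 0, pt 2 0) : Measure (R2 × R2))
      = (2:ℝ≥0∞) • Measure.dirac (pt 2 0, pt 2 0) by rw [← Nat.cast_smul_eq_nsmul ℝ≥0∞]; norm_num]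
  rw [show ((3:ℕ) • Measure.dirac (pt 1 0, pt 0 0) : Measure (R2 × R2))
      = (3:ℝ≥0∞) • Measure.dirac (pt 1 0, pt 0 0) by rw [← Nat.cast_smul_eq_nsmul ℝ≥0∞]; norm_num]
  rw [show ((3:ℕ) • Measure.dirac (pt 3 0, pt 4 0) : Measure (R2 × R2))
      = (3:ℝ≥0∞) • Measure.dirac (pt 3 0, pt 4 0) by rw [← Nat.cast_smul_eq_nsmul ℝ≥0∞]; norm_num]
  simp only [smul_add, smul_smul, c62, c243]
  abel

lemma integrable_dirac_cont {E : Type*} [NormedAddCommGroup E] {f : R2 × R2 → E}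
    (hf : Continuous f) (a : R2 × R2) : Integrable f (Measure.dirac a) := by
  refine ⟨hf.aestronglyMeasurable, ?_⟩
  simp [HasFiniteIntegral, lintegral_dirac]

lemma integrable_smul_dirac {E : Type*} [NormedAddCommGroup E] {f : R2 × R2 → E}
    (hf : Continuous f) (c : ℝ≥0∞) (hc : c ≠ ⊤) (a : R2 × R2) :
    Integrable f (c • Measure.dirac a) :=
  (integrable_dirac_cont hf a).smul_measure hc

lemma integral_piPrime {E : Type*} [NormedAddCommGroup E] [NormedSpace ℝ E] [CompleteSpace E]
    {f : R2 × R2 → E} (hf : Continuous f) :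
    ∫ p, f p ∂piPrime = (6:ℝ)⁻¹ • f (pt 1 0, pt 1 0) + (3:ℝ)⁻¹ • f (pt 2 0, pt 2 0)
      + (6:ℝ)⁻¹ • f (pt 3 0, pt 3 0) + (8:ℝ)⁻¹ • f (pt 1 0, pt 0 0)
      + (24:ℝ)⁻¹ • f (pt 1 0, pt 4 0) + (24:ℝ)⁻¹ • f (pt 3 0, pt 0 0)
      + (8:ℝ)⁻¹ • f (pt 3 0, pt 4 0) := by
  have h : ∀ (c : ℝ≥0∞), c ≠ ⊤ → ∀ a : R2 × R2,
      Integrable f (c • Measure.dirac a) := integrable_smul_dirac hf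
  rw [piPrime_eq]
  have t7 := h (8:ℝ≥0∞)⁻¹ (by norm_num) (pt 3 0, pt 4 0)
  have t6 := (h (24:ℝ≥0∞)⁻¹ (by norm_num) (pt 3 0, pt 0 0)).add_measure t7
  have t5 := (h (24:ℝ≥0∞)⁻¹ (by norm_num) (pt 1 0, pt 4 0)).add_measure t6
  have t4 := (h (8:ℝ≥0∞)⁻¹ (by norm_num) (pt 1 0, pt 0 0)).add_measure t5
  have t3 := (h (6:ℝ≥0∞)⁻¹ (by norm_num) (pt 3 0, pt 3 0)).add_measure t4
  have t2 := (h (3:ℝ≥0∞)⁻¹ (by norm_num) (pt 2 0, pt 2 0)).add_measure t3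
  rw [integral_add_measure (h _ (by norm_num) _) t2,
      integral_add_measure (h _ (by norm_num) _) t3,
      integral_add_measure (h _ (by norm_num) _) t4,
      integral_add_measure (h _ (by norm_num) _) t5,
      integral_add_measure (h _ (by norm_num) _) t6,
      integral_add_measure (h _ (by norm_num) _) t7]
  simp only [integral_smul_measure, integral_dirac, ENNReal.toReal_inv]
  norm_num [add_assoc]

lemma c6' : (6:ℝ≥0∞)⁻¹ = 4 * 24⁻¹ := by
  rw [show (24:ℝ≥0∞) = 4*6 by norm_num, ENNReal.mul_inv (Or.inl (by norm_num)) (Or.inl (by norm_num)),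
    ← mul_assoc, ENNReal.mul_inv_cancel (by norm_num) (by norm_num), one_mul]
lemma c3' : (3:ℝ≥0∞)⁻¹ = 8 * 24⁻¹ := by
  rw [show (24:ℝ≥0∞) = 8*3 by norm_num, ENNReal.mul_inv (Or.inl (by norm_num)) (Or.inl (by norm_num)),
    ← mul_assoc, ENNReal.mul_inv_cancel (by norm_num) (by norm_num), one_mul]
lemma c8' : (8:ℝ≥0∞)⁻¹ = 3 * 24⁻¹ := by
  rw [show (24:ℝ≥0∞) = 3*8 by norm_num, ENNReal.mul_inv (Or.inl (by norm_num)) (Or.inl (by norm_num)),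
    ← mul_assoc, ENNReal.mul_inv_cancel (by norm_num) (by norm_num), one_mul]
lemma c32 : (3:ℝ≥0∞)⁻¹ * 2⁻¹ = 6⁻¹ := by
  rw [← ENNReal.mul_inv (Or.inl (by norm_num)) (Or.inl (by norm_num))]; norm_num

lemma prob_piPrime : IsProbabilityMeasure piPrime := by
  constructor
  rw [piPrime_eq]
  simp only [Measure.add_apply, Measure.smul_apply, Measure.dirac_apply, smul_eq_mul,
    Set.indicator_univ, Pi.one_apply, mul_one]
  rw [c6', c3', c8', show (1:ℝ≥0∞) = 24 * 24⁻¹ from (ENNReal.mul_inv_cancel (by norm_num) (by norm_num)).symm]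
  ring

lemma hfst : piPrime.map Prod.fst = muM 3 := by
  ext s hs
  classical
  rw [Measure.map_apply measurable_fst hs, muM3, piPrime_eq]
  simp only [Measure.add_apply, Measure.smul_apply, Measure.dirac_apply, smul_eq_mul,
    Set.indicator_apply, Set.mem_preimage, Pi.one_apply]
  rw [c6', c3', c8']
  ring

lemma bind_eq : (muM 3).bind (Pker 0) =
    (6:ℝ≥0∞)⁻¹ • (Measure.dirac (pt 0 0) + Measure.dirac (pt 1 0) + Measure.dirac (pt 2 0)
      + Measure.dirac (pt 2 0) + Measure.dirac (pt 3 0) + Measure.dirac (pt 4 0)) := by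
  ext s hs
  classical
  rw [Measure.bind_apply hs measurable_Pker.aemeasurable, muM3]
  rw [lintegral_smul_measure, lintegral_add_measure, lintegral_add_measure,
    lintegral_dirac, lintegral_dirac, lintegral_dirac]
  simp only [Pker, dir_zero, pt_add, pt_sub, Measure.add_apply, Measure.smul_apply,
    Measure.dirac_apply, smul_eq_mul, Set.indicator_apply]
  norm_num
  rw [← c32]
  ring

lemma hsnd : piPrime.map Prod.snd = (muM 3).bind (Pker 0) := by
  ext s hs
  classical
  rw [Measure.map_apply measurable_snd hs, bind_eq, piPrime_eq]
  simp only [Measure.add_apply, Measure.smul_apply, Measure.dirac_apply, smul_eq_mul,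
    Set.indicator_apply, Set.mem_preimage, Pi.one_apply]
  rw [c6', c3', c8']
  ring

lemma mart (φ : R2 →ᵇ ℝ) : ∫ p, φ p.1 • (p.2 - p.1) ∂piPrime = 0 := by
  have hf : Continuous fun p : R2 × R2 => φ p.1 • (p.2 - p.1) :=
    (φ.continuous.comp continuous_fst).smul (continuous_snd.sub continuous_fst)
  rw [integral_piPrime hf]
  rw [show pt 0 0 - pt 1 0 = (-1:ℝ) • pt 1 0 by rw [pt_sub, pt_smul]; norm_num,
      show pt 4 0 - pt 1 0 = (3:ℝ) • pt 1 0 by rw [pt_sub, pt_smul]; norm_num,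
      show pt 0 0 - pt 3 0 = (-3:ℝ) • pt 1 0 by rw [pt_sub, pt_smul]; norm_num,
      show pt 4 0 - pt 3 0 = (1:ℝ) • pt 1 0 by rw [pt_sub, pt_smul]; norm_num]
  simp only [sub_self, smul_zero, add_zero, zero_add]
  module

lemma cfn_eq (x : R2) : (Pker 0 x).map (fun y => (x, y)) =
    (2:ℝ≥0∞)⁻¹ • (Measure.dirac (x, x + dir 0) + Measure.dirac (x, x - dir 0)) := by
  rw [Pker, Measure.map_smul, Measure.map_add _ _ measurable_prodMk_left,
      Measure.map_dirac' measurable_prodMk_left, Measure.map_dirac' measurable_prodMk_left]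

lemma measurable_cfn : Measurable (fun x : R2 => (Pker 0 x).map (fun y => (x, y))) := by
  simp only [cfn_eq]
  apply Measure.measurable_of_measurable_coe
  intro s hs
  simp only [Measure.smul_apply, Measure.add_apply, Measure.dirac_apply, smul_eq_mul]
  exact (((measurable_one.indicator hs).comp (measurable_id.prodMk (measurable_add_const _))).add
    ((measurable_one.indicator hs).comp (measurable_id.prodMk (measurable_sub_const _)))).const_mul _

lemma neq' : piPrime ≠ couple (muM 3) (Pker 0) := by
  intro h
  have h1 : piPrime {(pt 1 0, pt 1 0)} = (6:ℝ≥0∞)⁻¹ := by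
    classical
    rw [piPrime_eq]
    simp only [Measure.add_apply, Measure.smul_apply, Measure.dirac_apply, smul_eq_mul,
      Set.indicator_apply, Set.mem_singleton_iff, Prod.mk.injEq, pt_inj, Pi.one_apply]
    norm_num
  have h2 : couple (muM 3) (Pker 0) {(pt 1 0, pt 1 0)} = 0 := by
    classical
    rw [couple, Measure.bind_apply (measurableSet_singleton _) measurable_cfn.aemeasurable, muM3]
    rw [lintegral_smul_measure, lintegral_add_measure, lintegral_add_measure,
      lintegral_dirac, lintegral_dirac, lintegral_dirac]
    simp only [cfn_eq, dir_zero, pt_add, pt_sub, Measure.smul_apply, Measure.add_apply,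
      Measure.dirac_apply, Set.indicator_apply, Set.mem_singleton_iff, Prod.mk.injEq, pt_inj,
      Pi.one_apply, smul_eq_mul]
    norm_num
  rw [h, h2] at h1
  exact absurd h1.symm (by norm_num)

/-- `π'` is a martingale coupling between `μ_3` and `μ_3 P_0`,
different from `μ_3(Id, P_0)`. -/
theorem stmt10 :
    IsMartCoupling (muM 3) ((muM 3).bind (Pker 0)) piPrime
    ∧ piPrime ≠ couple (muM 3) (Pker 0) := by
  exact ⟨⟨⟨prob_piPrime, hfst, hsnd⟩, mart⟩, neq'⟩
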